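/- The Local Price of Anarchy of local 2-type Swap Schelling Games on a connected graph G with minimum degree δ ≥ 2 and maximum degree Δ is at most 2(1 + (Δ+1)/(δ−1)). In particular, in any local swap equilibrium the average utility of an agent is at least (δ−1)/(2(δ+Δ)). -/

import Mathlib

open SimpleGraph Finset
open scoped Classical

noncomputable def ssgUtil {V A : Type*} [Fintype V] [DecidableEq V]
    (G : SimpleGraph V) [DecidableRel G.Adj]
    {k : ℕ} (c : A → Fin k) (σ : A ≃ V) (i : A) : ℚ :=
  (((G.neighborFinset (σ i)).filter (fun v => c (σ.symm v) = c i)).card : ℚ) /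
    (G.degree (σ i) : ℚ)

def ssgSwap {V A : Type*} [DecidableEq V] (σ : A ≃ V) (i j : A) : A ≃ V :=
  σ.trans (Equiv.swap (σ i) (σ j))

def ssgProfitable {V A : Type*} [Fintype V] [DecidableEq V]
    (G : SimpleGraph V) [DecidableRel G.Adj]
    {k : ℕ} (c : A → Fin k) (σ : A ≃ V) (i j : A) : Prop :=
  c i ≠ c j ∧
    ssgUtil G c σ i < ssgUtil G c (ssgSwap σ i j) i ∧
    ssgUtil G c σ j < ssgUtil G c (ssgSwap σ i j) j

def ssgEquilibrium {V A : Type*} [Fintype V] [DecidableEq V]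
    (G : SimpleGraph V) [DecidableRel G.Adj]
    {k : ℕ} (c : A → Fin k) (σ : A ≃ V) : Prop :=
  ∀ i j : A, ¬ ssgProfitable G c σ i j

def ssgLocalEquilibrium {V A : Type*} [Fintype V] [DecidableEq V]
    (G : SimpleGraph V) [DecidableRel G.Adj]
    {k : ℕ} (c : A → Fin k) (σ : A ≃ V) : Prop :=
  ∀ i j : A, G.Adj (σ i) (σ j) → ¬ ssgProfitable G c σ i j

noncomputable def ssgWelfare {V A : Type*} [Fintype V] [DecidableEq V] [Fintype A]
    (G : SimpleGraph V) [DecidableRel G.Adj]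
    {k : ℕ} (c : A → Fin k) (σ : A ≃ V) : ℚ :=
  ∑ i : A, ssgUtil G c σ i

noncomputable def ssgPhi {V A : Type*} [Fintype V] [DecidableEq V]
    (G : SimpleGraph V) [DecidableRel G.Adj]
    {k : ℕ} (c : A → Fin k) (σ : A ≃ V) : ℕ :=
  (G.edgeFinset.filter (fun e => ∀ u ∈ e, ∀ v ∈ e, c (σ.symm u) = c (σ.symm v))).card

/-!
When adjacent agents `i`, `j` of different colours swap, `i` sees at `σ j` exactly the neighbours
of `σ j` not of `j`'s colour (there are only two colours), except `σ i`, which now holds `j`; so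
its new utility is `1 - u j - 1 / deg (σ j)`. Hence in a local equilibrium
`u i + u j ≥ 1 - 1/δ` along every bichromatic edge. Summing over the `B` ordered bichromatic
pairs gives `B (1 - 1/δ) ≤ 2 ∑ bᵢ uᵢ ≤ 2 Δ W`, where `bᵢ ≤ Δ` counts the neighbours of `i` of the
other colour, while `uᵢ = 1 - bᵢ / deg ≥ 1 - bᵢ / δ` gives `W ≥ n - B/δ`. Eliminating `B` yields
`W ≥ n (δ - 1) / (δ - 1 + 2Δ)`, and the bound on the price of anarchy follows from `W ≤ n`.
-/

section OtherNeighbors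

variable {V A : Type*} (G : SimpleGraph V) {k : ℕ} (c : A → Fin k) (σ : A ≃ V) [Fintype A]

noncomputable def ssgOtherNeighbors (i : A) : Finset A :=
  univ.filter fun j => G.Adj (σ i) (σ j) ∧ c j ≠ c i

lemma mem_ssgOtherNeighbors_comm {i j : A} :
    j ∈ ssgOtherNeighbors G c σ i ↔ i ∈ ssgOtherNeighbors G c σ j := by
  simp [ssgOtherNeighbors, G.adj_comm, ne_comm]

lemma sum_sum_ssgOtherNeighbors (f : A → ℚ) :
    ∑ i, ∑ j ∈ ssgOtherNeighbors G c σ i, f j = ∑ j, (ssgOtherNeighbors G c σ j).card * f j := by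
  rw [sum_comm' (t' := univ) (s' := ssgOtherNeighbors G c σ)
    fun i j => by simp [mem_ssgOtherNeighbors_comm G c σ (i := i)]]
  simp

variable [Fintype V] [DecidableRel G.Adj]

lemma card_ssgOtherNeighbors_add_card_filter (i : A) :
    (ssgOtherNeighbors G c σ i).card +
      ((G.neighborFinset (σ i)).filter fun v => c (σ.symm v) = c i).card = G.degree (σ i) := by
  have hmap : (ssgOtherNeighbors G c σ i).map σ.toEmbedding =
      (G.neighborFinset (σ i)).filter fun v => ¬ c (σ.symm v) = c i := by
    ext v
    obtain ⟨j, rfl⟩ := σ.surjective v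
    simp [ssgOtherNeighbors]
  rw [← card_map σ.toEmbedding, hmap, add_comm, card_filter_add_card_filter_not,
    card_neighborFinset_eq_degree]

lemma card_ssgOtherNeighbors_le_maxDegree (i : A) :
    (ssgOtherNeighbors G c σ i).card ≤ G.maxDegree :=
  (Nat.le.intro (card_ssgOtherNeighbors_add_card_filter G c σ i)).trans (G.degree_le_maxDegree _)

end OtherNeighbors

section Utility

variable {V A : Type*} [Fintype V] [DecidableEq V] (G : SimpleGraph V) [DecidableRel G.Adj]
  {k : ℕ} (c : A → Fin k) (σ : A ≃ V)

lemma ssgUtil_nonneg (i : A) : 0 ≤ ssgUtil G c σ i := by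
  unfold ssgUtil
  positivity

lemma ssgUtil_le_one (i : A) : ssgUtil G c σ i ≤ 1 :=
  div_le_one_of_le₀ (mod_cast (card_filter_le _ _).trans (G.card_neighborFinset_eq_degree _).le)
    (Nat.cast_nonneg _)

variable [Fintype A]

lemma ssgWelfare_le_card : ssgWelfare G c σ ≤ Fintype.card A := by
  simpa [ssgWelfare] using Finset.sum_le_sum fun i (_ : i ∈ univ) => ssgUtil_le_one G c σ i

lemma ssgUtil_eq_one_sub (i : A) (hi : G.degree (σ i) ≠ 0) :
    ssgUtil G c σ i = 1 - (ssgOtherNeighbors G c σ i).card / G.degree (σ i) := by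
  rw [ssgUtil, eq_sub_iff_add_eq, ← add_div, div_eq_one_iff_eq (mod_cast hi), add_comm]
  exact_mod_cast card_ssgOtherNeighbors_add_card_filter G c σ i

lemma one_sub_div_minDegree_le_ssgUtil (hδ : 0 < G.minDegree) (i : A) :
    1 - (ssgOtherNeighbors G c σ i).card / G.minDegree ≤ ssgUtil G c σ i := by
  have hdeg := G.minDegree_le_degree (σ i)
  rw [ssgUtil_eq_one_sub G c σ i (by omega)]
  gcongr

lemma card_sub_div_minDegree_le_ssgWelfare (hδ : 0 < G.minDegree) :
    Fintype.card A - (∑ i, ((ssgOtherNeighbors G c σ i).card : ℚ)) / G.minDegree ≤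
      ssgWelfare G c σ := by
  simpa [ssgWelfare, sum_div] using Finset.sum_le_sum fun i (_ : i ∈ univ) =>
    one_sub_div_minDegree_le_ssgUtil G c σ hδ i

end Utility

section Swap

variable {V A : Type*} [DecidableEq V] (σ : A ≃ V) (i j : A)

lemma ssgSwap_apply_left : ssgSwap σ i j i = σ j := by
  simp [ssgSwap]

lemma ssgSwap_symm_apply (v : V) :
    (ssgSwap σ i j).symm v = σ.symm (Equiv.swap (σ i) (σ j) v) := by
  simp [ssgSwap]

lemma ssgSwap_comm : ssgSwap σ i j = ssgSwap σ j i := by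
  rw [ssgSwap, ssgSwap, Equiv.swap_comm]

variable [Fintype V] (G : SimpleGraph V) [DecidableRel G.Adj] {k : ℕ} (c : A → Fin k)

lemma filter_ssgSwap_eq_erase (hc : c i ≠ c j) :
    (G.neighborFinset (σ j)).filter (fun v => c ((ssgSwap σ i j).symm v) = c i) =
      ((G.neighborFinset (σ j)).filter fun v => c (σ.symm v) = c i).erase (σ i) := by
  ext v
  simp only [mem_erase, mem_filter, mem_neighborFinset, ssgSwap_symm_apply]
  by_cases hvi : v = σ i
  · subst hvi
    simp [Ne.symm hc]
  · by_cases hvj : v = σ j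
    · subst hvj
      simp
    · rw [Equiv.swap_apply_of_ne_of_ne hvi hvj]
      tauto

lemma ssgUtil_ssgSwap_left (c : A → Fin 2) (hadj : G.Adj (σ i) (σ j)) (hc : c i ≠ c j) :
    ssgUtil G c (ssgSwap σ i j) i = 1 - ssgUtil G c σ j - 1 / G.degree (σ j) := by
  set N := G.neighborFinset (σ j)
  have hsplit : (N.filter fun v => c (σ.symm v) = c i) = N.filter fun v => ¬ c (σ.symm v) = c j :=
    filter_congr fun v _ => by omega
  have hmem : σ i ∈ N.filter fun v => c (σ.symm v) = c i := by simp [N, hadj.symm]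
  have hpos : 0 < (N.filter fun v => c (σ.symm v) = c i).card := card_pos.2 ⟨_, hmem⟩
  have hcount := card_filter_add_card_filter_not (s := N) (p := fun v => c (σ.symm v) = c j)
  rw [hsplit] at hpos
  rw [ssgUtil, ssgUtil, ssgSwap_apply_left, filter_ssgSwap_eq_erase σ i j G c hc,
    card_erase_of_mem hmem, hsplit, ← card_neighborFinset_eq_degree, ← hcount]
  push_cast [Nat.cast_sub hpos]
  field_simp
  ring

end Swap

section Equilibrium

variable {V A : Type*} [Fintype V] [DecidableEq V] {G : SimpleGraph V} [DecidableRel G.Adj]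
  {c : A → Fin 2} {σ : A ≃ V}

lemma ssgLocalEquilibrium.one_sub_inv_minDegree_le_add (heq : ssgLocalEquilibrium G c σ)
    (hδ : 0 < G.minDegree) {i j : A} (hadj : G.Adj (σ i) (σ j)) (hc : c i ≠ c j) :
    1 - 1 / G.minDegree ≤ ssgUtil G c σ i + ssgUtil G c σ j := by
  have hi : 1 / (G.degree (σ i) : ℚ) ≤ 1 / G.minDegree := by
    gcongr
    exact G.minDegree_le_degree _
  have hj : 1 / (G.degree (σ j) : ℚ) ≤ 1 / G.minDegree := by
    gcongr
    exact G.minDegree_le_degree _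
  have hswap_i := ssgUtil_ssgSwap_left σ i j G c hadj hc
  have hswap_j := ssgUtil_ssgSwap_left σ j i G c hadj.symm hc.symm
  rw [← ssgSwap_comm] at hswap_j
  have hnot := heq i j hadj
  simp only [ssgProfitable, not_and, not_lt] at hnot
  by_cases h : ssgUtil G c σ i < ssgUtil G c (ssgSwap σ i j) i
  · linarith [hnot hc h]
  · linarith

variable [Fintype A]

lemma ssgLocalEquilibrium.sum_card_ssgOtherNeighbors_mul_le (heq : ssgLocalEquilibrium G c σ)
    (hδ : 0 < G.minDegree) :
    (∑ i, ((ssgOtherNeighbors G c σ i).card : ℚ)) * (1 - 1 / G.minDegree) ≤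
      2 * G.maxDegree * ssgWelfare G c σ := by
  set u := ssgUtil G c σ
  calc (∑ i, ((ssgOtherNeighbors G c σ i).card : ℚ)) * (1 - 1 / G.minDegree)
      = ∑ i, ∑ _j ∈ ssgOtherNeighbors G c σ i, (1 - 1 / (G.minDegree : ℚ)) := by
        simp only [sum_const, nsmul_eq_mul, sum_mul]
    _ ≤ ∑ i, ∑ j ∈ ssgOtherNeighbors G c σ i, (u i + u j) := by
        gcongr with i _ j hj
        simp only [ssgOtherNeighbors, mem_filter, mem_univ, true_and] at hj
        exact heq.one_sub_inv_minDegree_le_add hδ hj.1 hj.2.symm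
    _ = 2 * ∑ i, (ssgOtherNeighbors G c σ i).card * u i := by
        simp only [sum_add_distrib, sum_const, nsmul_eq_mul, sum_sum_ssgOtherNeighbors]
        ring
    _ ≤ 2 * ∑ i, G.maxDegree * u i := by
        gcongr with i
        · exact ssgUtil_nonneg G c σ i
        · exact_mod_cast card_ssgOtherNeighbors_le_maxDegree G c σ i
    _ = 2 * G.maxDegree * ssgWelfare G c σ := by
        simp only [ssgWelfare, mul_sum, mul_assoc]
        rfl

lemma ssgLocalEquilibrium.card_mul_le_ssgWelfare (heq : ssgLocalEquilibrium G c σ)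
    (hδ : 2 ≤ G.minDegree) :
    (Fintype.card A : ℚ) * (((G.minDegree : ℚ) - 1) /
        (2 * ((G.minDegree : ℚ) + (G.maxDegree : ℚ)))) ≤ ssgWelfare G c σ := by
  have hδ0 : 0 < G.minDegree := by omega
  have hδq : (2 : ℚ) ≤ G.minDegree := mod_cast hδ
  have hlower := card_sub_div_minDegree_le_ssgWelfare G c σ hδ0
  have hupper := heq.sum_card_ssgOtherNeighbors_mul_le hδ0
  have hW : 0 ≤ ssgWelfare G c σ := sum_nonneg fun i _ => ssgUtil_nonneg G c σ i
  set B := ∑ i, ((ssgOtherNeighbors G c σ i).card : ℚ)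
  have hB : B * (1 - 1 / G.minDegree) = B / G.minDegree * (G.minDegree - 1) := by
    field_simp
  rw [hB] at hupper
  rw [← mul_div_assoc, div_le_iff₀ (by positivity)]
  nlinarith [mul_le_mul_of_nonneg_right hlower (by linarith : (0 : ℚ) ≤ G.minDegree - 1),
    mul_nonneg hW (by linarith : (0 : ℚ) ≤ G.minDegree + 1)]

end Equilibrium

theorem stmt9_general {V A : Type*} [Fintype V] [DecidableEq V] [Fintype A]
    (G : SimpleGraph V) [DecidableRel G.Adj]
    (hδ : 2 ≤ G.minDegree)
    (c : A → Fin 2) (σ : A ≃ V) (heq : ssgLocalEquilibrium G c σ) :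
    (Fintype.card A : ℚ) * (((G.minDegree : ℚ) - 1) /
        (2 * ((G.minDegree : ℚ) + (G.maxDegree : ℚ)))) ≤ ssgWelfare G c σ ∧
    ∀ σ' : A ≃ V,
      ssgWelfare G c σ' ≤
        2 * (1 + ((G.maxDegree : ℚ) + 1) / ((G.minDegree : ℚ) - 1)) *
          ssgWelfare G c σ := by
  have hW := heq.card_mul_le_ssgWelfare hδ
  refine ⟨hW, fun σ' => ?_⟩
  have hδq : (2 : ℚ) ≤ G.minDegree := mod_cast hδ
  have hδ1 : (0 : ℚ) < G.minDegree - 1 := by linarith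
  calc ssgWelfare G c σ' ≤ Fintype.card A := ssgWelfare_le_card G c σ'
    _ = 2 * (1 + ((G.maxDegree : ℚ) + 1) / ((G.minDegree : ℚ) - 1)) *
          ((Fintype.card A : ℚ) * (((G.minDegree : ℚ) - 1) /
            (2 * ((G.minDegree : ℚ) + (G.maxDegree : ℚ))))) := by
        field_simp
        ring
    _ ≤ _ := by gcongr

theorem stmt9 {V A : Type*} [Fintype V] [DecidableEq V] [Fintype A]
    (G : SimpleGraph V) [DecidableRel G.Adj] (hconn : G.Connected)
    (hδ : 2 ≤ G.minDegree)
    (c : A → Fin 2) (σ : A ≃ V) (heq : ssgLocalEquilibrium G c σ) :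
    (Fintype.card A : ℚ) * (((G.minDegree : ℚ) - 1) /
        (2 * ((G.minDegree : ℚ) + (G.maxDegree : ℚ)))) ≤ ssgWelfare G c σ ∧
    ∀ σ' : A ≃ V,
      ssgWelfare G c σ' ≤
        2 * (1 + ((G.maxDegree : ℚ) + 1) / ((G.minDegree : ℚ) - 1)) *
          ssgWelfare G c σ :=
  stmt9_general G hδ c σ heq
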